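/- arXiv:1907.12692 — 11 statements merged into one kernel-verified Lean document; each statement's English description precedes it below -/
import Mathlib

section
/- Let t, q, α, β, γ, δ, ε ∈ ℂ with t ≠ 0, t ≠ 1 and 1 + α + β = γ + δ + ε, and let U ⊆ ℂ be an open set disjoint from {0, 1, t}. Suppose u : ℂ → ℂ is holomorphic on U and satisfies the general Heun equation u''(z) + (γ/z + δ/(z−1) + ε/(z−t)) u'(z) + ((α·β·z − q)/(z(z−1)(z−t))) u(z) = 0 for all z ∈ U. Then the derivative v := u' satisfies, at every z ∈ U with α·β·z ≠ q, the second-order equation v''(z) + ((γ+1)/z + (δ+1)/(z−1) + (ε+1)/(z−t) − αβ/(αβ·z − q)) v'(z) + (f(z)/(z(z−1)(z−t)(αβ·z − q))) v(z) = 0, where f(z) = z(αβ·z − 2q)(αβ + γ + δ + ε) + (q² + q(γ + t(γ+δ) + ε) − αβγt). -/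
/-!
Clearing denominators, the Heun equation reads `P u'' + Q u' + R u = 0` with
`P = z (z - 1) (z - t)`, `Q = γ (z - 1) (z - t) + δ z (z - t) + ε z (z - 1)` and `R = αβz - q`.
Differentiating gives `P u''' + (P' + Q) u'' + (Q' + R) u' + R' u = 0`, and `R` times this minus
`R' = αβ` times the original equation eliminates `u`, leaving a second-order equation for `u'`
whose leading coefficient `R P` vanishes also at `z = q / (αβ)`.
-/

open Topology

section LinearODE

variable {f p q r : ℂ → ℂ} {U : Set ℂ} {z p' q' r' : ℂ}

theorem linearODE_differentiated (hU : IsOpen U) (hf : DifferentiableOn ℂ f U)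
    (h : ∀ w ∈ U, p w * deriv (deriv f) w + q w * deriv f w + r w * f w = 0) (hz : z ∈ U)
    (hp : HasDerivAt p p' z) (hq : HasDerivAt q q' z) (hr : HasDerivAt r r' z) :
    p z * deriv (deriv (deriv f)) z + (p' + q z) * deriv (deriv f) z
      + (q' + r z) * deriv f z + r' * f z = 0 := by
  have hf₀ := hf.analyticOnNhd hU
  have hf₁ := hf₀.deriv
  have hf₂ := hf₁.deriv
  have hL := ((hp.mul (hf₂ z hz).differentiableAt.hasDerivAt).add
    (hq.mul (hf₁ z hz).differentiableAt.hasDerivAt)).add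
    (hr.mul (hf₀ z hz).differentiableAt.hasDerivAt)
  have hL₀ : (fun w => p w * deriv (deriv f) w + q w * deriv f w + r w * f w)
      =ᶠ[𝓝 z] fun _ => 0 :=
    Filter.eventually_of_mem (hU.mem_nhds hz) h
  linear_combination hL.deriv.symm.trans (hL₀.deriv_eq.trans (deriv_const z 0))

theorem linearODE_for_deriv (hU : IsOpen U) (hf : DifferentiableOn ℂ f U)
    (h : ∀ w ∈ U, p w * deriv (deriv f) w + q w * deriv f w + r w * f w = 0) (hz : z ∈ U)
    (hp : HasDerivAt p p' z) (hq : HasDerivAt q q' z) (hr : HasDerivAt r r' z) :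
    r z * p z * deriv (deriv (deriv f)) z
      + (r z * (p' + q z) - r' * p z) * deriv (deriv f) z
      + (r z * (q' + r z) - r' * q z) * deriv f z = 0 := by
  linear_combination r z * linearODE_differentiated hU hf h hz hp hq hr - r' * h z hz

end LinearODE

theorem heun_clear_denominators {K : Type*} [Field K] {t q α β γ δ ε z u₀ u₁ u₂ : K}
    (hz0 : z ≠ 0) (hz1 : z ≠ 1) (hzt : z ≠ t)
    (h : u₂ + (γ / z + δ / (z - 1) + ε / (z - t)) * u₁
      + ((α * β * z - q) / (z * (z - 1) * (z - t))) * u₀ = 0) :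
    z * (z - 1) * (z - t) * u₂
      + (γ * (z - 1) * (z - t) + δ * z * (z - t) + ε * z * (z - 1)) * u₁
      + (α * β * z - q) * u₀ = 0 := by
  have h1 : z - 1 ≠ 0 := sub_ne_zero.mpr hz1
  have ht : z - t ≠ 0 := sub_ne_zero.mpr hzt
  field_simp at h
  linear_combination h

theorem derivative_of_general_Heun_general
    (t q α β γ δ ε : ℂ)
    (U : Set ℂ) (hU : IsOpen U)
    (hU0 : (0 : ℂ) ∉ U) (hU1 : (1 : ℂ) ∉ U) (hUt : t ∉ U)
    (u : ℂ → ℂ) (hu : DifferentiableOn ℂ u U)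
    (hode : ∀ z ∈ U,
      deriv (deriv u) z
        + (γ / z + δ / (z - 1) + ε / (z - t)) * deriv u z
        + ((α * β * z - q) / (z * (z - 1) * (z - t))) * u z = 0) :
    ∀ z ∈ U, α * β * z ≠ q →
      deriv (deriv (deriv u)) z
        + ((γ + 1) / z + (δ + 1) / (z - 1) + (ε + 1) / (z - t)
            - α * β / (α * β * z - q)) * deriv (deriv u) z
        + ((z * (α * β * z - 2 * q) * (α * β + γ + δ + ε)
            + (q ^ 2 + q * (γ + t * (γ + δ) + ε) - α * β * γ * t))
            / (z * (z - 1) * (z - t) * (α * β * z - q))) * deriv u z = 0 := by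
  have hcleared (w : ℂ) (hw : w ∈ U) := heun_clear_denominators (ne_of_mem_of_not_mem hw hU0)
    (ne_of_mem_of_not_mem hw hU1) (ne_of_mem_of_not_mem hw hUt) (hode w hw)
  intro z hz hzq
  have hid := hasDerivAt_id' z
  have hP : HasDerivAt (fun w => w * (w - 1) * (w - t)) (3 * z ^ 2 - 2 * (1 + t) * z + t) z :=
    ((hid.fun_mul (hid.sub_const 1)).fun_mul (hid.sub_const t)).congr_deriv (by ring)
  have hQ : HasDerivAt (fun w => γ * (w - 1) * (w - t) + δ * w * (w - t) + ε * w * (w - 1))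
      (γ * (2 * z - 1 - t) + δ * (2 * z - t) + ε * (2 * z - 1)) z :=
    ((((hid.sub_const 1).const_mul γ).fun_mul (hid.sub_const t)).add
      ((hid.const_mul δ).fun_mul (hid.sub_const t)) |>.add
      ((hid.const_mul ε).fun_mul (hid.sub_const 1))).congr_deriv (by ring)
  have hR : HasDerivAt (fun w => α * β * w - q) (α * β) z :=
    ((hid.const_mul (α * β)).sub_const q).congr_deriv (mul_one _)
  have hu' := linearODE_for_deriv hU hu hcleared hz hP hQ hR
  have h0 : z ≠ 0 := ne_of_mem_of_not_mem hz hU0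
  have h1 : z - 1 ≠ 0 := sub_ne_zero.mpr (ne_of_mem_of_not_mem hz hU1)
  have ht : z - t ≠ 0 := sub_ne_zero.mpr (ne_of_mem_of_not_mem hz hUt)
  -- the form in which `field_simp` meets the denominator `α * β * z - q`
  have hq : z * α * β - q ≠ 0 := by rw [mul_rotate]; exact sub_ne_zero.mpr hzq
  field_simp
  linear_combination hu'

/-- The derivative of a general Heun function satisfies a second-order Fuchsian
equation with an additional singularity at `z = q/(αβ)`. -/
theorem derivative_of_general_Heun
    (t q α β γ δ ε : ℂ) (ht0 : t ≠ 0) (ht1 : t ≠ 1)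
    (hFuchs : 1 + α + β = γ + δ + ε)
    (U : Set ℂ) (hU : IsOpen U)
    (hU0 : (0 : ℂ) ∉ U) (hU1 : (1 : ℂ) ∉ U) (hUt : t ∉ U)
    (u : ℂ → ℂ) (hu : DifferentiableOn ℂ u U)
    (hode : ∀ z ∈ U,
      deriv (deriv u) z
        + (γ / z + δ / (z - 1) + ε / (z - t)) * deriv u z
        + ((α * β * z - q) / (z * (z - 1) * (z - t))) * u z = 0) :
    ∀ z ∈ U, α * β * z ≠ q →
      deriv (deriv (deriv u)) z
        + ((γ + 1) / z + (δ + 1) / (z - 1) + (ε + 1) / (z - t)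
            - α * β / (α * β * z - q)) * deriv (deriv u) z
        + ((z * (α * β * z - 2 * q) * (α * β + γ + δ + ε)
            + (q ^ 2 + q * (γ + t * (γ + δ) + ε) - α * β * γ * t))
            / (z * (z - 1) * (z - t) * (α * β * z - q))) * deriv u z = 0 :=
  derivative_of_general_Heun_general t q α β γ δ ε U hU hU0 hU1 hUt u hu hode
end

section
/- Let q, α, γ, δ, ε ∈ ℂ and let U ⊆ ℂ be an open set disjoint from {0, 1}. Suppose u : ℂ → ℂ is holomorphic on U and satisfies the confluent Heun equation u''(z) + (γ/z + δ/(z−1) + ε) u'(z) + ((α·z − q)/(z(z−1))) u(z) = 0 for all z ∈ U. Then v := u' satisfies, at every z ∈ U with α·z ≠ q, v''(z) + ((γ+1)/z + (δ+1)/(z−1) + ε − α/(α·z − q)) v'(z) + (g(z)/(z(z−1)(α·z − q))) v(z) = 0, where g(z) = (α + ε)(α·z² − 2q·z) + (q² − (γ + δ − ε)q + αγ). -/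
/-!
Write the equation as `u'' + P u' + Q u = 0`. Differentiating gives
`u''' + P u'' + (P' + Q) u' + Q' u = 0`, and where `Q ≠ 0` (for confluent Heun: `α z ≠ q`) the
original equation expresses `u` through `u'` and `u''`. Eliminating `u` leaves a second-order
equation for `u'` with coefficients `P - Q'/Q` and `P' + Q - P Q'/Q`, which for
`P = γ/z + δ/(z-1) + ε`, `Q = (α z - q)/(z (z-1))` are the stated ones.
-/

open Filter Topology

theorem deriv_solves_secondOrder_of_solves {U : Set ℂ} (hU : IsOpen U) {u P Q : ℂ → ℂ}
    (hu : DifferentiableOn ℂ u U)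
    (hode : ∀ w ∈ U, deriv (deriv u) w + P w * deriv u w + Q w * u w = 0)
    {z : ℂ} (hz : z ∈ U) (hP : DifferentiableAt ℂ P z) (hQ : DifferentiableAt ℂ Q z)
    (hQz : Q z ≠ 0) :
    deriv (deriv (deriv u)) z + (P z - deriv Q z / Q z) * deriv (deriv u) z
      + (deriv P z + Q z - P z * deriv Q z / Q z) * deriv u z = 0 := by
  have hA : AnalyticOnNhd ℂ u U := hu.analyticOnNhd hU
  have hu₀ := (hA z hz).differentiableAt
  have hu₁ := (hA.deriv z hz).differentiableAt
  have hu₂ := (hA.deriv.deriv z hz).differentiableAt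
  have hode_nhds : (fun w => deriv (deriv u) w + P w * deriv u w + Q w * u w) =ᶠ[𝓝 z] 0 :=
    eventually_of_mem (hU.mem_nhds hz) hode
  have hode_hasDeriv : HasDerivAt (fun w => deriv (deriv u) w + P w * deriv u w + Q w * u w)
      (deriv (deriv (deriv u)) z + (deriv P z * deriv u z + P z * deriv (deriv u) z)
        + (deriv Q z * u z + Q z * deriv u z)) z :=
    (hu₂.hasDerivAt.add (hP.hasDerivAt.mul hu₁.hasDerivAt)).add (hQ.hasDerivAt.mul hu₀.hasDerivAt)
  have hode_deriv : deriv (deriv (deriv u)) z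
      + (deriv P z * deriv u z + P z * deriv (deriv u) z)
      + (deriv Q z * u z + Q z * deriv u z) = 0 := by
    rw [← hode_hasDeriv.deriv, hode_nhds.deriv_eq]
    exact deriv_const z 0
  linear_combination (norm := skip) hode_deriv - deriv Q z / Q z * hode z hz
  field_simp
  ring

noncomputable def confluentHeunP (γ δ ε : ℂ) (z : ℂ) : ℂ := γ / z + δ / (z - 1) + ε

noncomputable def confluentHeunQ (q α : ℂ) (z : ℂ) : ℂ := (α * z - q) / (z * (z - 1))

theorem hasDerivAt_confluentHeunP (γ δ ε : ℂ) {z : ℂ} (hz₀ : z ≠ 0) (hz₁ : z - 1 ≠ 0) :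
    HasDerivAt (confluentHeunP γ δ ε) (-γ / z ^ 2 - δ / (z - 1) ^ 2) z := by
  have h := (((hasDerivAt_const z γ).div (hasDerivAt_id z) hz₀).add
    ((hasDerivAt_const z δ).div ((hasDerivAt_id z).sub_const 1) hz₁)).add_const ε
  refine h.congr_deriv ?_
  simp only [id_eq]
  field_simp
  ring

theorem hasDerivAt_confluentHeunQ (q α : ℂ) {z : ℂ} (hz₀ : z ≠ 0) (hz₁ : z - 1 ≠ 0) :
    HasDerivAt (confluentHeunQ q α) ((-α * z ^ 2 + 2 * q * z - q) / (z ^ 2 * (z - 1) ^ 2)) z := by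
  have h := (((hasDerivAt_id z).const_mul α).sub_const q).div
    ((hasDerivAt_id z).mul ((hasDerivAt_id z).sub_const 1)) (mul_ne_zero hz₀ hz₁)
  refine h.congr_deriv ?_
  simp only [id_eq, Pi.mul_apply]
  field_simp
  ring

theorem confluentHeunP_sub_div_confluentHeunQ (q α γ δ ε : ℂ) {z : ℂ} (hz₀ : z ≠ 0)
    (hz₁ : z - 1 ≠ 0) (hq : α * z ≠ q) :
    confluentHeunP γ δ ε z
      - (-α * z ^ 2 + 2 * q * z - q) / (z ^ 2 * (z - 1) ^ 2) / confluentHeunQ q α z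
      = (γ + 1) / z + (δ + 1) / (z - 1) + ε - α / (α * z - q) := by
  -- the form in which `field_simp` meets this denominator
  have hq' : z * α - q ≠ 0 := by rwa [mul_comm, sub_ne_zero]
  unfold confluentHeunP confluentHeunQ
  field_simp
  ring

theorem deriv_confluentHeunP_add_confluentHeunQ_sub_mul_div (q α γ δ ε : ℂ) {z : ℂ} (hz₀ : z ≠ 0)
    (hz₁ : z - 1 ≠ 0) (hq : α * z ≠ q) :
    -γ / z ^ 2 - δ / (z - 1) ^ 2 + confluentHeunQ q α z
      - confluentHeunP γ δ ε z * ((-α * z ^ 2 + 2 * q * z - q) / (z ^ 2 * (z - 1) ^ 2))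
        / confluentHeunQ q α z
      = ((α + ε) * (α * z ^ 2 - 2 * q * z) + (q ^ 2 - (γ + δ - ε) * q + α * γ))
            / (z * (z - 1) * (α * z - q)) := by
  have hq' : z * α - q ≠ 0 := by rwa [mul_comm, sub_ne_zero]
  unfold confluentHeunP confluentHeunQ
  field_simp
  ring

/-- The derivative of a confluent Heun function satisfies a second-order
equation with an additional singularity at `z = q/α`. -/
theorem derivative_of_confluent_Heun
    (q α γ δ ε : ℂ)
    (U : Set ℂ) (hU : IsOpen U)
    (hU0 : (0 : ℂ) ∉ U) (hU1 : (1 : ℂ) ∉ U)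
    (u : ℂ → ℂ) (hu : DifferentiableOn ℂ u U)
    (hode : ∀ z ∈ U,
      deriv (deriv u) z
        + (γ / z + δ / (z - 1) + ε) * deriv u z
        + ((α * z - q) / (z * (z - 1))) * u z = 0) :
    ∀ z ∈ U, α * z ≠ q →
      deriv (deriv (deriv u)) z
        + ((γ + 1) / z + (δ + 1) / (z - 1) + ε - α / (α * z - q)) * deriv (deriv u) z
        + (((α + ε) * (α * z ^ 2 - 2 * q * z) + (q ^ 2 - (γ + δ - ε) * q + α * γ))
            / (z * (z - 1) * (α * z - q))) * deriv u z = 0 := by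
  intro z hz hq
  have hz₀ : z ≠ 0 := fun h => hU0 (h ▸ hz)
  have hz₁ : z - 1 ≠ 0 := sub_ne_zero.mpr fun h => hU1 (h ▸ hz)
  have hq₀ : α * z - q ≠ 0 := sub_ne_zero.mpr hq
  have hP := hasDerivAt_confluentHeunP γ δ ε hz₀ hz₁
  have hQ := hasDerivAt_confluentHeunQ q α hz₀ hz₁
  have key := deriv_solves_secondOrder_of_solves (P := confluentHeunP γ δ ε)
    (Q := confluentHeunQ q α) hU hu hode hz hP.differentiableAt hQ.differentiableAt
    (div_ne_zero hq₀ (mul_ne_zero hz₀ hz₁))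
  rw [hP.deriv, hQ.deriv] at key
  rwa [confluentHeunP_sub_div_confluentHeunQ q α γ δ ε hz₀ hz₁ hq,
    deriv_confluentHeunP_add_confluentHeunQ_sub_mul_div q α γ δ ε hz₀ hz₁ hq] at key
end

section
/- Let q, α, γ, δ, ε ∈ ℂ and let U ⊆ ℂ be an open set with 0 ∉ U. Suppose u : ℂ → ℂ is holomorphic on U and satisfies the bi-confluent Heun equation u''(z) + (γ/z + δ + ε·z) u'(z) + ((α·z − q)/z) u(z) = 0 for all z ∈ U. Then v := u' satisfies, at every z ∈ U with α·z ≠ q, v''(z) + ((γ+1)/z + δ + ε·z − α/(α·z − q)) v'(z) + (k(z)/(z(α·z − q))) v(z) = 0, where k(z) = (α + ε)·z·(α·z − 2q) + (q² − δq − αγ). -/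
/-! Differentiating `u'' + P u' + Q u = 0` gives `u''' + P u'' + (P' + Q) u' + Q' u = 0`, and where
`Q ≠ 0` the undifferentiated equation expresses `u` through `u'` and `u''`, leaving a second-order
equation for `u'`. For the bi-confluent Heun equation `Q(z) = α - q/z` vanishes at `z = q/α`, which
becomes a new singular point. -/

open Filter Topology

theorem deriv_satisfies_ode_of_linear_second_order {𝕜 : Type*} [NontriviallyNormedField 𝕜]
    {P Q u : 𝕜 → 𝕜} {z : 𝕜}
    (hode : ∀ᶠ w in 𝓝 z, deriv (deriv u) w + P w * deriv u w + Q w * u w = 0)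
    (hP : DifferentiableAt 𝕜 P z) (hQ : DifferentiableAt 𝕜 Q z) (hQz : Q z ≠ 0)
    (hu : DifferentiableAt 𝕜 u z) (hu' : DifferentiableAt 𝕜 (deriv u) z)
    (hu'' : DifferentiableAt 𝕜 (deriv (deriv u)) z) :
    deriv (deriv (deriv u)) z + (P z - deriv Q z / Q z) * deriv (deriv u) z
      + (deriv P z + Q z - P z * deriv Q z / Q z) * deriv u z = 0 := by
  have hdiff : deriv (deriv (deriv u)) z + (deriv P z * deriv u z + P z * deriv (deriv u) z)
      + (deriv Q z * u z + Q z * deriv u z) = 0 :=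
    ((hu''.hasDerivAt.add (hP.hasDerivAt.mul hu'.hasDerivAt)).add
      (hQ.hasDerivAt.mul hu.hasDerivAt)).unique
      ((hasDerivAt_const z 0).congr_of_eventuallyEq hode)
  have hcancel : deriv Q z / Q z * Q z = deriv Q z := div_mul_cancel₀ _ hQz
  linear_combination hdiff - deriv Q z / Q z * hode.self_of_nhds + u z * hcancel

/-- The derivative of a bi-confluent Heun function satisfies a second-order
equation with an additional singularity at `z = q/α`. -/
theorem derivative_of_bi_confluent_Heun
    (q α γ δ ε : ℂ)
    (U : Set ℂ) (hU : IsOpen U) (hU0 : (0 : ℂ) ∉ U)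
    (u : ℂ → ℂ) (hu : DifferentiableOn ℂ u U)
    (hode : ∀ z ∈ U,
      deriv (deriv u) z
        + (γ / z + δ + ε * z) * deriv u z
        + ((α * z - q) / z) * u z = 0) :
    ∀ z ∈ U, α * z ≠ q →
      deriv (deriv (deriv u)) z
        + ((γ + 1) / z + δ + ε * z - α / (α * z - q)) * deriv (deriv u) z
        + (((α + ε) * z * (α * z - 2 * q) + (q ^ 2 - δ * q - α * γ))
            / (z * (α * z - q))) * deriv u z = 0 := by
  intro z hz hαz
  have hz0 : z ≠ 0 := fun h => hU0 (h ▸ hz)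
  have haz : α * z - q ≠ 0 := sub_ne_zero.mpr hαz
  have hza : z * α - q ≠ 0 := by rwa [mul_comm]
  have han : AnalyticOnNhd ℂ u U := hu.analyticOnNhd hU
  have hP : HasDerivAt (fun w : ℂ => γ / w + δ + ε * w) (-γ / z ^ 2 + ε) z :=
    ((((hasDerivAt_const z γ).div (hasDerivAt_id z) hz0).add_const δ).add
      ((hasDerivAt_id z).const_mul ε)).congr_deriv (by simp only [id]; ring)
  have hQ : HasDerivAt (fun w : ℂ => (α * w - q) / w) (q / z ^ 2) z :=
    ((((hasDerivAt_id z).const_mul α).sub_const q).div (hasDerivAt_id z) hz0).congr_deriv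
      (by simp only [id]; ring)
  have key := deriv_satisfies_ode_of_linear_second_order
    (eventually_of_mem (hU.mem_nhds hz) hode) hP.differentiableAt hQ.differentiableAt
    (div_ne_zero haz hz0) (han z hz).differentiableAt (han.deriv z hz).differentiableAt
    (han.deriv.deriv z hz).differentiableAt
  have hcoeff₁ : γ / z + δ + ε * z - q / z ^ 2 / ((α * z - q) / z)
      = (γ + 1) / z + δ + ε * z - α / (α * z - q) := by
    field_simp
    ring
  have hcoeff₀ : -γ / z ^ 2 + ε + (α * z - q) / z
        - (γ / z + δ + ε * z) * (q / z ^ 2) / ((α * z - q) / z)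
      = ((α + ε) * z * (α * z - 2 * q) + (q ^ 2 - δ * q - α * γ)) / (z * (α * z - q)) := by
    field_simp
    ring
  rwa [hP.deriv, hQ.deriv, hcoeff₁, hcoeff₀] at key
end

section
/- Let t, λ, κ₀, κ₁, θ, κ∞ ∈ ℂ with t ∉ {0, 1} and λ ∉ {0, 1, t}. Set κ = (1/4)(κ₀ + κ₁ + θ − 1)² − (1/4)κ∞², γ = −κ₀, δ = −κ₁, ε = −θ, P = κ₀ + κ₁ + θ + κ (the value of the product αβ), q = P·λ, and assume P ≠ 0. Define μ = κ₀/λ + κ₁/(λ−1) + θ/(λ−t) and let H be determined by t(t−1)H = λ(λ−1)(λ−t)μ² − (κ₀(λ−1)(λ−t) + κ₁λ(λ−t) + (θ−1)λ(λ−1))μ + κ(λ−t). Then for every z ∈ ℂ ∖ {0, 1, t, λ}: (i) (γ+1)/z + (δ+1)/(z−1) + (ε+1)/(z−t) − P/(P·z − q) = (1−κ₀)/z + (1−κ₁)/(z−1) + (1−θ)/(z−t) − 1/(z−λ); and (ii) f(z)/(z(z−1)(z−t)(P·z − q)) = κ/(z(z−1)) − t(t−1)H/(z(z−1)(z−t))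 + λ(λ−1)μ/(z(z−1)(z−λ)), where f(z) = z(P·z − 2q)(P + γ + δ + ε) + (q² + q(γ + t(γ+δ) + ε) − P·γ·t). Hence the equation for the derivative of the general Heun function coincides with the linear equation whose isomonodromic deformations are governed by the sixth Painlevé equation. -/
/-!
Both identities reduce to partial fractions once the apparent singularity is located:
with `q = P λ` the factor `P z - q` is `P (z - λ)`, so the Heun derivative equation has its
apparent singular point at `z = λ` and `P` cancels throughout. On the Painlevé side,
`λ (λ - 1) (λ - t) μ` is the polynomial `A = κ₀ (λ - 1)(λ - t) + κ₁ λ (λ - t) + θ λ (λ - 1)`,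
which collapses the Hamiltonian to `t (t - 1) H = λ (λ - 1) μ + κ (λ - t)`. Both sides of the
second identity then equal `(κ (z - λ)² + A) / (z (z - 1) (z - t) (z - λ))`; on the Heun side
this uses `P + γ + δ + ε = κ`.
-/

section

variable {K : Type*} [Field K]

theorem painleve_mu_mul_eq {t lam κ₀ κ₁ θ : K} (hl0 : lam ≠ 0) (hl1 : lam ≠ 1) (hlt : lam ≠ t) :
    lam * (lam - 1) * (lam - t) * (κ₀ / lam + κ₁ / (lam - 1) + θ / (lam - t))
      = κ₀ * (lam - 1) * (lam - t) + κ₁ * lam * (lam - t) + θ * lam * (lam - 1) := by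
  have hl1' : lam - 1 ≠ 0 := sub_ne_zero.mpr hl1
  have hlt' : lam - t ≠ 0 := sub_ne_zero.mpr hlt
  field_simp

theorem painleve_hamiltonian_eq {t lam κ₀ κ₁ θ κ μ : K}
    (hμ : lam * (lam - 1) * (lam - t) * μ
      = κ₀ * (lam - 1) * (lam - t) + κ₁ * lam * (lam - t) + θ * lam * (lam - 1)) :
    lam * (lam - 1) * (lam - t) * μ ^ 2
        - (κ₀ * (lam - 1) * (lam - t) + κ₁ * lam * (lam - t)
            + (θ - 1) * lam * (lam - 1)) * μ + κ * (lam - t)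
      = lam * (lam - 1) * μ + κ * (lam - t) := by
  linear_combination μ * hμ

theorem painleve_coeff_eq_div {t lam κ m z : K}
    (hz0 : z ≠ 0) (hz1 : z ≠ 1) (hzt : z ≠ t) (hzl : z ≠ lam) :
    κ / (z * (z - 1)) - (m + κ * (lam - t)) / (z * (z - 1) * (z - t))
        + m / (z * (z - 1) * (z - lam))
      = (κ * (z - lam) ^ 2 + m * (lam - t)) / (z * (z - 1) * (z - t) * (z - lam)) := by
  have hz1' : z - 1 ≠ 0 := sub_ne_zero.mpr hz1
  have hzt' : z - t ≠ 0 := sub_ne_zero.mpr hzt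
  have hzl' : z - lam ≠ 0 := sub_ne_zero.mpr hzl
  field_simp
  ring

theorem heun_numerator_eq {t lam κ₀ κ₁ θ κ γ δ ε P q z : K}
    (hγ : γ = -κ₀) (hδ : δ = -κ₁) (hε : ε = -θ)
    (hP : P = κ₀ + κ₁ + θ + κ) (hq : q = P * lam) :
    z * (P * z - 2 * q) * (P + γ + δ + ε)
        + (q ^ 2 + q * (γ + t * (γ + δ) + ε) - P * γ * t)
      = P * (κ * (z - lam) ^ 2
          + (κ₀ * (lam - 1) * (lam - t) + κ₁ * lam * (lam - t) + θ * lam * (lam - 1))) := by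
  subst hγ hδ hε hq hP
  ring

end

theorem general_Heun_derivative_eq_PVI_linear_general
    (t lam κ₀ κ₁ θ κ γ δ ε P q μ H : ℂ)
    (hl0 : lam ≠ 0) (hl1 : lam ≠ 1) (hlt : lam ≠ t)
    (hγ : γ = -κ₀) (hδ : δ = -κ₁) (hε : ε = -θ)
    (hP : P = κ₀ + κ₁ + θ + κ) (hq : q = P * lam) (hP0 : P ≠ 0)
    (hμ : μ = κ₀ / lam + κ₁ / (lam - 1) + θ / (lam - t))
    (hH : t * (t - 1) * H =
      lam * (lam - 1) * (lam - t) * μ ^ 2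
        - (κ₀ * (lam - 1) * (lam - t) + κ₁ * lam * (lam - t)
            + (θ - 1) * lam * (lam - 1)) * μ + κ * (lam - t)) :
    ∀ z : ℂ, z ≠ 0 → z ≠ 1 → z ≠ t → z ≠ lam →
      ((γ + 1) / z + (δ + 1) / (z - 1) + (ε + 1) / (z - t) - P / (P * z - q)
          = (1 - κ₀) / z + (1 - κ₁) / (z - 1) + (1 - θ) / (z - t) - 1 / (z - lam))
      ∧
      ((z * (P * z - 2 * q) * (P + γ + δ + ε)
          + (q ^ 2 + q * (γ + t * (γ + δ) + ε) - P * γ * t))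
          / (z * (z - 1) * (z - t) * (P * z - q))
        = κ / (z * (z - 1)) - t * (t - 1) * H / (z * (z - 1) * (z - t))
            + lam * (lam - 1) * μ / (z * (z - 1) * (z - lam))) := by
  intro z hz0 hz1 hzt hzl
  have hμA := painleve_mu_mul_eq (κ₀ := κ₀) (κ₁ := κ₁) (θ := θ) hl0 hl1 hlt
  rw [← hμ] at hμA
  have hPz : P * z - q = P * (z - lam) := by rw [hq]; ring
  refine ⟨?_, ?_⟩
  · rw [hPz, div_mul_cancel_left₀ hP0, hγ, hδ, hε]
    ring
  · rw [heun_numerator_eq hγ hδ hε hP hq, hPz, mul_left_comm _ P, mul_div_mul_left _ _ hP0,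
      hH, painleve_hamiltonian_eq hμA, painleve_coeff_eq_div hz0 hz1 hzt hzl, ← hμA]
    ring

/-- With the parameter identification of the paper, the equation for the derivative
of the general Heun function coincides with the linear equation whose isomonodromic
deformations are governed by the sixth Painlevé equation. -/
theorem general_Heun_derivative_eq_PVI_linear
    (t lam κ₀ κ₁ θ κinf κ γ δ ε P q μ H : ℂ)
    (ht0 : t ≠ 0) (ht1 : t ≠ 1)
    (hl0 : lam ≠ 0) (hl1 : lam ≠ 1) (hlt : lam ≠ t)
    (hκ : κ = (1 / 4) * (κ₀ + κ₁ + θ - 1) ^ 2 - (1 / 4) * κinf ^ 2)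
    (hγ : γ = -κ₀) (hδ : δ = -κ₁) (hε : ε = -θ)
    (hP : P = κ₀ + κ₁ + θ + κ) (hq : q = P * lam) (hP0 : P ≠ 0)
    (hμ : μ = κ₀ / lam + κ₁ / (lam - 1) + θ / (lam - t))
    (hH : t * (t - 1) * H =
      lam * (lam - 1) * (lam - t) * μ ^ 2
        - (κ₀ * (lam - 1) * (lam - t) + κ₁ * lam * (lam - t)
            + (θ - 1) * lam * (lam - 1)) * μ + κ * (lam - t)) :
    ∀ z : ℂ, z ≠ 0 → z ≠ 1 → z ≠ t → z ≠ lam →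
      ((γ + 1) / z + (δ + 1) / (z - 1) + (ε + 1) / (z - t) - P / (P * z - q)
          = (1 - κ₀) / z + (1 - κ₁) / (z - 1) + (1 - θ) / (z - t) - 1 / (z - lam))
      ∧
      ((z * (P * z - 2 * q) * (P + γ + δ + ε)
          + (q ^ 2 + q * (γ + t * (γ + δ) + ε) - P * γ * t))
          / (z * (z - 1) * (z - t) * (P * z - q))
        = κ / (z * (z - 1)) - t * (t - 1) * H / (z * (z - 1) * (z - t))
            + lam * (lam - 1) * μ / (z * (z - 1) * (z - lam))) :=
  general_Heun_derivative_eq_PVI_linear_general t lam κ₀ κ₁ θ κ γ δ ε P q μ H hl0 hl1 hlt hγ hδ hε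
    hP hq hP0 hμ hH
end

section
/- Let κ₀, κ₁, θ, κ ∈ ℂ and let I ⊆ ℝ be a nonempty open interval with 0 ∉ I and 1 ∉ I. Let λ : I → ℂ be differentiable with λ(t) ∉ {0, 1, t} for all t ∈ I, and define μ : I → ℂ by μ(t) = κ₀/λ(t) + κ₁/(λ(t)−1) + θ/(λ(t)−t). Suppose λ and μ satisfy the Hamiltonian system t(t−1)·λ'(t) = 2λ(λ−1)(λ−t)μ − (κ₀(λ−1)(λ−t) + κ₁λ(λ−t) + (θ−1)λ(λ−1)) and t(t−1)·μ'(t) = −[(3λ² − 2(1+t)λ + t)μ² − (κ₀(2λ−1−t) + κ₁(2λ−t) + (θ−1)(2λ−1))μ + κ] on I (these are dλ/dt = ∂H_VI/∂μ and dμ/dt = −∂H_VI/∂λ). Then λ satisfies the Riccati equation t(t−1)·dλ/dt = κ₀t − (1 + κ₀ + (κ₀+κ₁)t + θ)λ + (1 + κ₀ + κ₁ + θ)λ², and moreover κ₀ + κ₁ + θ + κ = 0. -/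
/-!
On the constraint surface `μ = κ₀/λ + κ₁/(λ-1) + θ/(λ-t)`, the equation `λ' = ∂H/∂μ` is the
stated Riccati equation after clearing the denominator `λ(λ-1)(λ-t)`. Differentiating the constraint
along that Riccati flow and adding `∂H/∂λ` leaves exactly the constant `κ₀ + κ₁ + θ + κ`, so the
second Hamiltonian equation holds only if this constant vanishes.
-/

open Set

namespace PainleveVI

variable (κ₀ κ₁ θ : ℂ)

noncomputable def constrainedMomentum (q t : ℂ) : ℂ := κ₀ / q + κ₁ / (q - 1) + θ / (q - t)

variable {κ₀ κ₁ θ} {q t : ℂ}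

theorem constrainedMomentum_mul (h0 : q ≠ 0) (h1 : q ≠ 1) (ht : q ≠ t) :
    constrainedMomentum κ₀ κ₁ θ q t * (q * (q - 1) * (q - t)) =
      κ₀ * (q - 1) * (q - t) + κ₁ * q * (q - t) + θ * q * (q - 1) := by
  have h1' : q - 1 ≠ 0 := sub_ne_zero.mpr h1
  have ht' : q - t ≠ 0 := sub_ne_zero.mpr ht
  unfold constrainedMomentum
  field_simp

theorem hamiltonian_dp_constrainedMomentum (h0 : q ≠ 0) (h1 : q ≠ 1) (ht : q ≠ t) :
    2 * q * (q - 1) * (q - t) * constrainedMomentum κ₀ κ₁ θ q t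
        - (κ₀ * (q - 1) * (q - t) + κ₁ * q * (q - t) + (θ - 1) * q * (q - 1)) =
      κ₀ * t - (1 + κ₀ + (κ₀ + κ₁) * t + θ) * q + (1 + κ₀ + κ₁ + θ) * q ^ 2 := by
  linear_combination 2 * constrainedMomentum_mul (κ₀ := κ₀) (κ₁ := κ₁) (θ := θ) h0 h1 ht

theorem hasDerivAt_constrainedMomentum {l : ℝ → ℂ} {L : ℂ} {x : ℝ} (hl : HasDerivAt l L x)
    (h0 : l x ≠ 0) (h1 : l x ≠ 1) (ht : l x ≠ x) :
    HasDerivAt (fun y : ℝ => constrainedMomentum κ₀ κ₁ θ (l y) y)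
      (-(κ₀ * L) / l x ^ 2 - κ₁ * L / (l x - 1) ^ 2 - θ * (L - 1) / (l x - x) ^ 2) x := by
  have hofReal : HasDerivAt (fun y : ℝ => (y : ℂ)) 1 x :=
    (hasDerivAt_id (x : ℂ)).comp_ofReal
  have h := (((hasDerivAt_const x κ₀).fun_div hl h0).fun_add
    ((hasDerivAt_const x κ₁).fun_div (hl.sub_const 1) (sub_ne_zero.mpr h1))).fun_add
    ((hasDerivAt_const x θ).fun_div (hl.fun_sub hofReal) (sub_ne_zero.mpr ht))
  exact h.congr_deriv (by ring)

theorem hamiltonian_dq_add_deriv_constrainedMomentum (κ : ℂ) {L : ℂ}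
    (h0 : q ≠ 0) (h1 : q ≠ 1) (ht : q ≠ t)
    (hL : t * (t - 1) * L =
      κ₀ * t - (1 + κ₀ + (κ₀ + κ₁) * t + θ) * q + (1 + κ₀ + κ₁ + θ) * q ^ 2) :
    t * (t - 1) * (-(κ₀ * L) / q ^ 2 - κ₁ * L / (q - 1) ^ 2 - θ * (L - 1) / (q - t) ^ 2)
      + ((3 * q ^ 2 - 2 * (1 + t) * q + t) * constrainedMomentum κ₀ κ₁ θ q t ^ 2
        - (κ₀ * (2 * q - 1 - t) + κ₁ * (2 * q - t) + (θ - 1) * (2 * q - 1))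
          * constrainedMomentum κ₀ κ₁ θ q t + κ) =
      κ₀ + κ₁ + θ + κ := by
  have h1' : q - 1 ≠ 0 := sub_ne_zero.mpr h1
  have ht' : q - t ≠ 0 := sub_ne_zero.mpr ht
  have hdμ : t * (t - 1) *
      (-(κ₀ * L) / q ^ 2 - κ₁ * L / (q - 1) ^ 2 - θ * (L - 1) / (q - t) ^ 2) =
      -(t * (t - 1) * L) * (κ₀ / q ^ 2 + κ₁ / (q - 1) ^ 2 + θ / (q - t) ^ 2)
        + t * (t - 1) * θ / (q - t) ^ 2 := by ring
  rw [hdμ, hL]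
  unfold constrainedMomentum
  field_simp
  ring

end PainleveVI

open PainleveVI

theorem PVI_constrained_solution_Riccati_general
    (κ₀ κ₁ θ κ : ℂ) (a b : ℝ) (hab : a < b)
    (l m : ℝ → ℂ)
    (hld : ∀ x ∈ Set.Ioo a b, DifferentiableAt ℝ l x)
    (hl0 : ∀ x ∈ Set.Ioo a b, l x ≠ 0)
    (hl1 : ∀ x ∈ Set.Ioo a b, l x ≠ 1)
    (hlt : ∀ x ∈ Set.Ioo a b, l x ≠ (x : ℂ))
    (hm : ∀ x ∈ Set.Ioo a b,
      m x = κ₀ / l x + κ₁ / (l x - 1) + θ / (l x - (x : ℂ)))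
    (hham1 : ∀ x ∈ Set.Ioo a b,
      (x : ℂ) * ((x : ℂ) - 1) * deriv l x =
        2 * l x * (l x - 1) * (l x - (x : ℂ)) * m x
          - (κ₀ * (l x - 1) * (l x - (x : ℂ)) + κ₁ * l x * (l x - (x : ℂ))
              + (θ - 1) * l x * (l x - 1)))
    (hham2 : ∀ x ∈ Set.Ioo a b,
      (x : ℂ) * ((x : ℂ) - 1) * deriv m x =
        -((3 * l x ^ 2 - 2 * (1 + (x : ℂ)) * l x + (x : ℂ)) * m x ^ 2
            - (κ₀ * (2 * l x - 1 - (x : ℂ)) + κ₁ * (2 * l x - (x : ℂ))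
                + (θ - 1) * (2 * l x - 1)) * m x + κ)) :
    (∀ x ∈ Set.Ioo a b,
      (x : ℂ) * ((x : ℂ) - 1) * deriv l x =
        κ₀ * (x : ℂ) - (1 + κ₀ + (κ₀ + κ₁) * (x : ℂ) + θ) * l x
          + (1 + κ₀ + κ₁ + θ) * l x ^ 2)
    ∧ κ₀ + κ₁ + θ + κ = 0 := by
  have riccati : ∀ x ∈ Ioo a b, (x : ℂ) * ((x : ℂ) - 1) * deriv l x =
      κ₀ * (x : ℂ) - (1 + κ₀ + (κ₀ + κ₁) * (x : ℂ) + θ) * l x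
        + (1 + κ₀ + κ₁ + θ) * l x ^ 2 := fun x hx => by
    rw [hham1 x hx, hm x hx]
    exact hamiltonian_dp_constrainedMomentum (hl0 x hx) (hl1 x hx) (hlt x hx)
  refine ⟨riccati, ?_⟩
  obtain ⟨x, hx⟩ := nonempty_Ioo.mpr hab
  have hm_deriv := (hasDerivAt_constrainedMomentum (κ₀ := κ₀) (κ₁ := κ₁) (θ := θ)
    (hld x hx).hasDerivAt (hl0 x hx) (hl1 x hx) (hlt x hx)).congr_of_eventuallyEq
      (Filter.eventuallyEq_of_mem (isOpen_Ioo.mem_nhds hx) hm)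
  have hconst := hamiltonian_dq_add_deriv_constrainedMomentum κ
    (hl0 x hx) (hl1 x hx) (hlt x hx) (riccati x hx)
  have hμ : m x = constrainedMomentum κ₀ κ₁ θ (l x) x := hm x hx
  rw [← hm_deriv.deriv, ← hμ] at hconst
  linear_combination -hconst + hham2 x hx

/-- If `(λ, μ)` solve the `P_VI` Hamiltonian system with `μ` constrained to the
stated rational function of `λ`, then `λ` solves a Riccati equation and
`κ₀ + κ₁ + θ + κ = 0`. -/
theorem PVI_constrained_solution_Riccati
    (κ₀ κ₁ θ κ : ℂ) (a b : ℝ) (hab : a < b)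
    (h0 : (0 : ℝ) ∉ Set.Ioo a b) (h1 : (1 : ℝ) ∉ Set.Ioo a b)
    (l m : ℝ → ℂ)
    (hld : ∀ x ∈ Set.Ioo a b, DifferentiableAt ℝ l x)
    (hl0 : ∀ x ∈ Set.Ioo a b, l x ≠ 0)
    (hl1 : ∀ x ∈ Set.Ioo a b, l x ≠ 1)
    (hlt : ∀ x ∈ Set.Ioo a b, l x ≠ (x : ℂ))
    (hm : ∀ x ∈ Set.Ioo a b,
      m x = κ₀ / l x + κ₁ / (l x - 1) + θ / (l x - (x : ℂ)))
    (hham1 : ∀ x ∈ Set.Ioo a b,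
      (x : ℂ) * ((x : ℂ) - 1) * deriv l x =
        2 * l x * (l x - 1) * (l x - (x : ℂ)) * m x
          - (κ₀ * (l x - 1) * (l x - (x : ℂ)) + κ₁ * l x * (l x - (x : ℂ))
              + (θ - 1) * l x * (l x - 1)))
    (hham2 : ∀ x ∈ Set.Ioo a b,
      (x : ℂ) * ((x : ℂ) - 1) * deriv m x =
        -((3 * l x ^ 2 - 2 * (1 + (x : ℂ)) * l x + (x : ℂ)) * m x ^ 2
            - (κ₀ * (2 * l x - 1 - (x : ℂ)) + κ₁ * (2 * l x - (x : ℂ))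
                + (θ - 1) * (2 * l x - 1)) * m x + κ)) :
    (∀ x ∈ Set.Ioo a b,
      (x : ℂ) * ((x : ℂ) - 1) * deriv l x =
        κ₀ * (x : ℂ) - (1 + κ₀ + (κ₀ + κ₁) * (x : ℂ) + θ) * l x
          + (1 + κ₀ + κ₁ + θ) * l x ^ 2)
    ∧ κ₀ + κ₁ + θ + κ = 0 :=
  PVI_constrained_solution_Riccati_general κ₀ κ₁ θ κ a b hab l m hld hl0 hl1 hlt hm hham1 hham2
end

section
/- Let t, λ, κ₀, θ∞ ∈ ℂ with λ ≠ 0 and θ∞ ≠ −1. Set γ = −κ₀, δ = −t, ε = −1/2, α = (θ∞ + 1)/2, q = αλ, μ = t + κ₀/λ + λ/2, and H = 2λμ² − (λ² + 2tλ + 2κ₀)μ + θ∞λ. Then for every z ∈ ℂ ∖ {0, λ}: (i) (γ+1)/z + δ + εz − α/(αz − q) = (1−κ₀)/z − (z + 2t)/2 − 1/(z−λ); and (ii) k(z)/(z(αz − q)) = (1/2)θ∞ − H/(2z) + λμ/(z(z−λ)), where k(z) = (α+ε)·z·(αz − 2q) + (q² − δq − αγ). Hence the equation for the derivative of the bi-confluent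 Heun function coincides with the linear equation whose isomonodromic deformations are governed by the fourth Painlevé equation. -/
/-!
With `q = αλ` the singular point `q / α` of the Heun derivative equation is `λ`, so
`α z - q = α (z - λ)` and the factor `α` cancels from both coefficients. The value of `μ` is the
one with `2λμ = λ² + 2tλ + 2κ₀`, which kills the `μ`-dependent part of `H_IV`, leaving
`H_IV = θ∞ λ`. Finally `k(z) = α (θ∞/2 · (z - λ)² + λμ)`, and dividing by `α z (z - λ)` gives
the `P_IV` coefficient `θ∞/2 - θ∞ λ / (2z) + λμ / (z (z - λ))`.
-/

section

variable {K : Type*} [Field K]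

lemma div_mul_sub_mul_eq_one_div_sub {a z w : K} (ha : a ≠ 0) :
    a / (a * z - a * w) = 1 / (z - w) := by
  rw [← mul_sub, div_mul_cancel_left₀ ha, one_div]

lemma mul_add_div_add_div_two_eq {t κ l : K} (hl : l ≠ 0) :
    l * (t + κ / l + l / 2) = t * l + κ + l ^ 2 / 2 := by
  field_simp

lemma PIV_hamiltonian_eq_of_two_mul_mul_eq {t κ θ l μ : K}
    (h : 2 * l * μ = l ^ 2 + 2 * t * l + 2 * κ) :
    2 * l * μ ^ 2 - (l ^ 2 + 2 * t * l + 2 * κ) * μ + θ * l = θ * l := by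
  linear_combination μ * h

-- `k(z)` with `γ = -κ₀`, `δ = -t`, `ε = -1/2`, `q = αλ` substituted literally.
lemma biconfluentHeun_accessory_numerator_eq {θ t κ l μ α z : K} (hα : α = (θ + 1) / 2)
    (hlμ : l * μ = t * l + κ + l ^ 2 / 2) :
    (α + -(1 / 2)) * z * (α * z - 2 * (α * l)) + ((α * l) ^ 2 - -t * (α * l) - α * -κ)
      = α * (θ / 2 * (z - l) ^ 2 + l * μ) := by
  rw [hlμ, hα]; ring

variable [NeZero (2 : K)]

lemma div_two_mul_sub_sq_add_div_eq {θ c l z : K} (hz : z ≠ 0) (hzl : z - l ≠ 0) :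
    (θ / 2 * (z - l) ^ 2 + c) / (z * (z - l))
      = 1 / 2 * θ - θ * l / (2 * z) + c / (z * (z - l)) := by
  field_simp

end

/-- With the parameter identification of the paper, the equation for the derivative
of the bi-confluent Heun function coincides with the linear equation whose
isomonodromic deformations are governed by the fourth Painlevé equation. -/
theorem bi_confluent_Heun_derivative_eq_PIV_linear
    (t lam κ₀ θinf γ δ ε α q μ H : ℂ)
    (hl0 : lam ≠ 0) (hθ : θinf ≠ -1)
    (hγ : γ = -κ₀) (hδ : δ = -t) (hε : ε = -(1 / 2))
    (hα : α = (θinf + 1) / 2) (hq : q = α * lam)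
    (hμ : μ = t + κ₀ / lam + lam / 2)
    (hH : H = 2 * lam * μ ^ 2 - (lam ^ 2 + 2 * t * lam + 2 * κ₀) * μ + θinf * lam) :
    ∀ z : ℂ, z ≠ 0 → z ≠ lam →
      ((γ + 1) / z + δ + ε * z - α / (α * z - q)
          = (1 - κ₀) / z - (z + 2 * t) / 2 - 1 / (z - lam))
      ∧
      (((α + ε) * z * (α * z - 2 * q) + (q ^ 2 - δ * q - α * γ)) / (z * (α * z - q))
        = (1 / 2) * θinf - H / (2 * z) + lam * μ / (z * (z - lam))) := by
  intro z hz hzl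
  have hα0 : α ≠ 0 := hα ▸ div_ne_zero (fun h => hθ (eq_neg_of_add_eq_zero_left h)) two_ne_zero
  have hlμ : lam * μ = t * lam + κ₀ + lam ^ 2 / 2 := hμ ▸ mul_add_div_add_div_two_eq hl0
  have hH' : H = θinf * lam :=
    hH ▸ PIV_hamiltonian_eq_of_two_mul_mul_eq (by linear_combination 2 * hlμ)
  subst hγ hδ hε hq
  constructor
  · rw [div_mul_sub_mul_eq_one_div_sub hα0]
    ring
  · rw [biconfluentHeun_accessory_numerator_eq hα hlμ, ← mul_sub, mul_left_comm z,
      mul_div_mul_left _ _ hα0, div_two_mul_sub_sq_add_div_eq hz (sub_ne_zero.mpr hzl), hH']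
end

section
/- Let κ₀, θ∞ ∈ ℂ and let I ⊆ ℝ be a nonempty open interval. Let λ : I → ℂ be differentiable with λ(t) ≠ 0 for all t ∈ I, and define μ : I → ℂ by μ(t) = t + κ₀/λ(t) + λ(t)/2. Suppose λ and μ satisfy the Hamiltonian system λ'(t) = 4λμ − (λ² + 2tλ + 2κ₀) and μ'(t) = −(2μ² − 2(λ + t)μ + θ∞) on I (these are dλ/dt = ∂H_IV/∂μ and dμ/dt = −∂H_IV/∂λ). Then λ satisfies the Riccati equation dλ/dt = λ² + 2tλ + 2κ₀, and moreover θ∞ + 1 = 0. -/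
/-! On the constraint `μ = t + κ₀/λ + λ/2` the first Hamilton equation reads `λ' = 2λμ`, which is
the Riccati equation `λ' = λ² + 2tλ + 2κ₀`. Differentiating the constraint along this flow and
comparing with the second Hamilton equation, everything cancels except `θ∞ + 1`, which must
therefore vanish at any point of the (nonempty) interval. -/

open Filter Topology

namespace PainleveIV

variable {κ₀ : ℂ} {x : ℝ} {z : ℂ}

lemma riccati_of_constraint (hz : z ≠ 0) :
    4 * z * ((x : ℂ) + κ₀ / z + z / 2) - (z ^ 2 + 2 * (x : ℂ) * z + 2 * κ₀) =
      z ^ 2 + 2 * (x : ℂ) * z + 2 * κ₀ := by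
  field_simp
  ring

lemma hasDerivAt_constraint {l : ℝ → ℂ} {l' : ℂ} (hl : HasDerivAt l l' x) (h0 : l x ≠ 0) :
    HasDerivAt (fun t : ℝ => (t : ℂ) + κ₀ / l t + l t / 2)
      (1 - κ₀ * l' / l x ^ 2 + l' / 2) x := by
  have hofReal : HasDerivAt (fun t : ℝ => (t : ℂ)) 1 x := by
    simpa using (hasDerivAt_id x).ofReal_comp
  refine ((hofReal.add ((hasDerivAt_const x κ₀).div hl h0)).add (hl.div_const 2)).congr_deriv ?_
  ring

lemma constraint_deriv_add_hamiltonian {m : ℂ} (θ : ℂ) (hz : z ≠ 0)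
    (hm : m = (x : ℂ) + κ₀ / z + z / 2) :
    1 - κ₀ * (z ^ 2 + 2 * (x : ℂ) * z + 2 * κ₀) / z ^ 2 + (z ^ 2 + 2 * (x : ℂ) * z + 2 * κ₀) / 2
      + (2 * m ^ 2 - 2 * (z + (x : ℂ)) * m + θ) = θ + 1 := by
  subst hm
  field_simp
  ring

end PainleveIV

open PainleveIV in
/-- If `(λ, μ)` solve the `P_IV` Hamiltonian system with `μ` constrained to the
stated rational function of `λ`, then `λ` solves a Riccati equation and
`θ∞ + 1 = 0`. -/
theorem PIV_constrained_solution_Riccati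
    (κ₀ θinf : ℂ)
    (a b : ℝ) (hab : a < b)
    (l m : ℝ → ℂ)
    (hld : ∀ x ∈ Set.Ioo a b, DifferentiableAt ℝ l x)
    (hl0 : ∀ x ∈ Set.Ioo a b, l x ≠ 0)
    (hm : ∀ x ∈ Set.Ioo a b, m x = (x : ℂ) + κ₀ / l x + l x / 2)
    (hham1 : ∀ x ∈ Set.Ioo a b,
      deriv l x = 4 * l x * m x - (l x ^ 2 + 2 * (x : ℂ) * l x + 2 * κ₀))
    (hham2 : ∀ x ∈ Set.Ioo a b,
      deriv m x = -(2 * m x ^ 2 - 2 * (l x + (x : ℂ)) * m x + θinf)) :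
    (∀ x ∈ Set.Ioo a b,
      deriv l x = l x ^ 2 + 2 * (x : ℂ) * l x + 2 * κ₀)
    ∧ θinf + 1 = 0 := by
  have hric : ∀ x ∈ Set.Ioo a b, deriv l x = l x ^ 2 + 2 * (x : ℂ) * l x + 2 * κ₀ := by
    intro x hx
    rw [hham1 x hx, hm x hx]
    exact riccati_of_constraint (hl0 x hx)
  refine ⟨hric, ?_⟩
  obtain ⟨x, hx⟩ := Set.nonempty_Ioo.2 hab
  have hm_eq : m =ᶠ[𝓝 x] fun t : ℝ => (t : ℂ) + κ₀ / l t + l t / 2 :=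
    eventually_of_mem (isOpen_Ioo.mem_nhds hx) hm
  have hdm : deriv m x = 1 - κ₀ * deriv l x / l x ^ 2 + deriv l x / 2 := by
    rw [hm_eq.deriv_eq]
    exact (hasDerivAt_constraint (hld x hx).hasDerivAt (hl0 x hx)).deriv
  have hflow := hham2 x hx
  rw [hdm, hric x hx] at hflow
  rw [← constraint_deriv_add_hamiltonian θinf (hl0 x hx) (hm x hx), hflow]
  ring
end

section
/- Let t, λ, η₀, η∞, θ₀, θ∞ ∈ ℂ with λ ≠ 0 and η∞(θ₀ + θ∞ + 2) ≠ 0. Set γ = tη₀, δ = −1 − θ₀, ε = −η∞, α = (1/2)η∞(θ₀ + θ∞ + 2), q = αλ, μ = η∞ − tη₀/λ² + (θ₀ + 1)/λ, and let H be determined by t·H = λ²μ² − (η∞λ² + θ₀λ − η₀t)μ + (1/2)η∞(θ₀ + θ∞)λ. Then for every z ∈ ℂ ∖ {0, λ}: (i) γ/z² + (δ+2)/z + ε − α/(αz − q) = η₀t/z² + (1−θ₀)/z − η∞ − 1/(z−λ); and (ii) h(z)/(z²(αz − q)) = η∞(θ₀+θ∞)/(2z) − tH/z² + λμ/(z(z−λ)),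 where h(z) = (α+ε)(αz² − 2qz) + (q² − δq − αγ). Hence the equation for the derivative of the double-confluent Heun function coincides with the linear equation whose isomonodromic deformations are governed by the modified third Painlevé equation P′_III. -/
/-!
Since `q = αλ`, the factor `α` cancels from the Heun coefficients, leaving the pole `1/(z - λ)`
and a quadratic numerator over `z²(z - λ)`. On the Painlevé side, the choice of `μ` makes
`λ²μ - (η∞λ² + θ₀λ - η₀t) = λ`, so the quadratic part of `tH` collapses to `λμ`; the partial
fraction decomposition of the Painlevé coefficient then has the same numerator.
-/

section Field

variable {F : Type*} [Field F]

lemma heun_potential_eq_div_sq_mul_sub {α ε δ γ l z : F} (hα : α ≠ 0) :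
    ((α + ε) * (α * z ^ 2 - 2 * (α * l) * z) + ((α * l) ^ 2 - δ * (α * l) - α * γ))
        / (z ^ 2 * (α * z - α * l))
      = ((α + ε) * (z ^ 2 - 2 * l * z) + (α * l ^ 2 - δ * l - γ)) / (z ^ 2 * (z - l)) := by
  rw [show (α + ε) * (α * z ^ 2 - 2 * (α * l) * z) + ((α * l) ^ 2 - δ * (α * l) - α * γ)
      = α * ((α + ε) * (z ^ 2 - 2 * l * z) + (α * l ^ 2 - δ * l - γ)) by ring,
    show z ^ 2 * (α * z - α * l) = α * (z ^ 2 * (z - l)) by ring, mul_div_mul_left _ _ hα]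

lemma div_sq_mul_sub_eq_partial_fractions {c m K l z : F} (hz : z ≠ 0) (hzl : z ≠ l)
    (hK : K = l * m + c * l) :
    (c * (z ^ 2 - 2 * l * z) + K * l) / (z ^ 2 * (z - l))
      = c / z - K / z ^ 2 + l * m / (z * (z - l)) := by
  have hzl' : z - l ≠ 0 := sub_ne_zero.mpr hzl
  field_simp
  linear_combination z * hK

lemma hamiltonian_eq_of_sq_mul_mu {t l η₀ ηinf θ₀ θinf μ : F}
    (hν : l ^ 2 * μ = ηinf * l ^ 2 - t * η₀ + (θ₀ + 1) * l) :
    l ^ 2 * μ ^ 2 - (ηinf * l ^ 2 + θ₀ * l - η₀ * t) * μ + (1 / 2) * ηinf * (θ₀ + θinf) * l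
      = l * μ + ηinf * (θ₀ + θinf) / 2 * l := by
  linear_combination μ * hν

end Field

/-- With the parameter identification of the paper, the equation for the derivative
of the double-confluent Heun function coincides with the linear equation whose
isomonodromic deformations are governed by the modified third Painlevé equation. -/
theorem double_confluent_Heun_derivative_eq_PIII_linear
    (t lam η₀ ηinf θ₀ θinf γ δ ε α q μ H : ℂ)
    (hl0 : lam ≠ 0) (hne : ηinf * (θ₀ + θinf + 2) ≠ 0)
    (hγ : γ = t * η₀) (hδ : δ = -1 - θ₀) (hε : ε = -ηinf)
    (hα : α = (1 / 2) * ηinf * (θ₀ + θinf + 2)) (hq : q = α * lam)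
    (hμ : μ = ηinf - t * η₀ / lam ^ 2 + (θ₀ + 1) / lam)
    (hH : t * H = lam ^ 2 * μ ^ 2 - (ηinf * lam ^ 2 + θ₀ * lam - η₀ * t) * μ
        + (1 / 2) * ηinf * (θ₀ + θinf) * lam) :
    ∀ z : ℂ, z ≠ 0 → z ≠ lam →
      (γ / z ^ 2 + (δ + 2) / z + ε - α / (α * z - q)
          = η₀ * t / z ^ 2 + (1 - θ₀) / z - ηinf - 1 / (z - lam))
      ∧
      (((α + ε) * (α * z ^ 2 - 2 * q * z) + (q ^ 2 - δ * q - α * γ))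
          / (z ^ 2 * (α * z - q))
        = ηinf * (θ₀ + θinf) / (2 * z) - t * H / z ^ 2 + lam * μ / (z * (z - lam))) := by
  intro z hz hzl
  have hα0 : α ≠ 0 := by
    rw [hα, mul_assoc]; exact mul_ne_zero (by norm_num) hne
  have hν : lam ^ 2 * μ = ηinf * lam ^ 2 - t * η₀ + (θ₀ + 1) * lam := by
    rw [hμ]; field_simp
  have htH : t * H = lam * μ + ηinf * (θ₀ + θinf) / 2 * lam := by
    rw [hH, hamiltonian_eq_of_sq_mul_mu hν]
  subst hq hγ hδ hε
  refine ⟨?_, ?_⟩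
  · rw [← mul_sub, div_mul_cancel_left₀ hα0]
    ring
  · calc _ = ((α + -ηinf) * (z ^ 2 - 2 * lam * z) + (α * lam ^ 2 - (-1 - θ₀) * lam - t * η₀))
            / (z ^ 2 * (z - lam)) := heun_potential_eq_div_sq_mul_sub hα0
      _ = (ηinf * (θ₀ + θinf) / 2 * (z ^ 2 - 2 * lam * z) + t * H * lam)
            / (z ^ 2 * (z - lam)) := by
          congr 1
          linear_combination (z ^ 2 - 2 * lam * z + lam ^ 2) * hα - lam * htH - hν
      _ = _ := div_sq_mul_sub_eq_partial_fractions hz hzl htH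
      _ = _ := by ring
end

section
/- Let η₀, η∞, θ₀, θ∞ ∈ ℂ and let I ⊆ ℝ be a nonempty open interval with 0 ∉ I. Let λ : I → ℂ be differentiable with λ(t) ≠ 0 for all t ∈ I, and define μ : I → ℂ by μ(t) = η∞ − tη₀/λ(t)² + (θ₀ + 1)/λ(t). Suppose λ and μ satisfy the Hamiltonian system t·λ'(t) = 2λ²μ − (η∞λ² + θ₀λ − η₀t) and t·μ'(t) = −(2λμ² − (2η∞λ + θ₀)μ + (1/2)η∞(θ₀ + θ∞)) on I (these are dλ/dt = ∂H′_III/∂μ and dμ/dt = −∂H′_III/∂λ). Then λ satisfies the Riccati equation t·dλ/dt = η∞λ² + (θ₀ + 2)λ − tη₀, and moreover η∞(θ₀ + θ∞ + 2) = 0. -/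
/-!
On the constraint curve `μ = η∞ − tη₀/λ² + (θ₀ + 1)/λ` the first Hamiltonian equation collapses to
the Riccati equation `tλ' = η∞λ² + (θ₀ + 2)λ − tη₀`. Differentiating the constraint along a
Riccati solution, the second Hamiltonian equation fails exactly by the constant
`η∞(θ₀ + θ∞ + 2)/2`, which therefore vanishes as soon as the interval contains a single point.
-/

open Filter Topology

section Algebra

variable {K : Type*} [Field K]

/-- `t ∂H′_III/∂μ`, the right-hand side of `t dλ/dt`. -/
def lambdaField (η₀ ηinf θ₀ t L M : K) : K :=
  2 * L ^ 2 * M - (ηinf * L ^ 2 + θ₀ * L - η₀ * t)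

/-- `-t ∂H′_III/∂λ`, the right-hand side of `t dμ/dt`. -/
def muField (ηinf θ₀ θinf L M : K) : K :=
  -(2 * L * M ^ 2 - (2 * ηinf * L + θ₀) * M + (1 / 2) * ηinf * (θ₀ + θinf))

def constrainedMomentum (η₀ ηinf θ₀ t L : K) : K :=
  ηinf - t * η₀ / L ^ 2 + (θ₀ + 1) / L

theorem lambdaField_constrainedMomentum {η₀ ηinf θ₀ t L : K} (hL : L ≠ 0) :
    lambdaField η₀ ηinf θ₀ t L (constrainedMomentum η₀ ηinf θ₀ t L) =
      ηinf * L ^ 2 + (θ₀ + 2) * L - t * η₀ := by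
  unfold lambdaField constrainedMomentum
  field_simp
  ring

/-- `-η₀/L² + (2tη₀/L³ - (θ₀ + 1)/L²) L'` is `d/dt constrainedMomentum` when `L' = dλ/dt`. -/
theorem muField_constrainedMomentum [NeZero (2 : K)] {η₀ ηinf θ₀ θinf t L L' : K} (hL : L ≠ 0)
    (hL' : t * L' = ηinf * L ^ 2 + (θ₀ + 2) * L - t * η₀) :
    muField ηinf θ₀ θinf L (constrainedMomentum η₀ ηinf θ₀ t L) =
      t * (-η₀ / L ^ 2 + (2 * t * η₀ / L ^ 3 - (θ₀ + 1) / L ^ 2) * L') -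
        (1 / 2) * ηinf * (θ₀ + θinf + 2) := by
  have hexpand : t * (-η₀ / L ^ 2 + (2 * t * η₀ / L ^ 3 - (θ₀ + 1) / L ^ 2) * L') =
      -t * η₀ / L ^ 2 + (2 * t * η₀ / L ^ 3 - (θ₀ + 1) / L ^ 2) * (t * L') := by ring
  rw [hexpand, hL']
  unfold muField constrainedMomentum
  field_simp
  ring

end Algebra

theorem hasDerivAt_constrainedMomentum {η₀ ηinf θ₀ : ℂ} {l : ℝ → ℂ} {l' : ℂ} {x : ℝ}
    (hl : HasDerivAt l l' x) (hx : l x ≠ 0) :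
    HasDerivAt (fun s : ℝ => constrainedMomentum η₀ ηinf θ₀ (s : ℂ) (l s))
      (-η₀ / l x ^ 2 + (2 * x * η₀ / l x ^ 3 - (θ₀ + 1) / l x ^ 2) * l') x := by
  have hs : HasDerivAt (fun s : ℝ => (s : ℂ)) 1 x := (hasDerivAt_id x).ofReal_comp
  have h := ((hasDerivAt_const x ηinf).sub
    ((hs.mul_const η₀).div (hl.pow 2) (pow_ne_zero 2 hx))).add
      ((hasDerivAt_const x (θ₀ + 1)).div hl hx)
  refine h.congr_deriv ?_
  simp only [Pi.pow_apply]
  field_simp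
  ring

theorem PIII_constrained_solution_Riccati_general
    (η₀ ηinf θ₀ θinf : ℂ)
    (a b : ℝ) (hab : a < b)
    (l m : ℝ → ℂ)
    (hld : ∀ x ∈ Set.Ioo a b, DifferentiableAt ℝ l x)
    (hl0 : ∀ x ∈ Set.Ioo a b, l x ≠ 0)
    (hm : ∀ x ∈ Set.Ioo a b,
      m x = ηinf - (x : ℂ) * η₀ / l x ^ 2 + (θ₀ + 1) / l x)
    (hham1 : ∀ x ∈ Set.Ioo a b,
      (x : ℂ) * deriv l x =
        2 * l x ^ 2 * m x - (ηinf * l x ^ 2 + θ₀ * l x - η₀ * (x : ℂ)))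
    (hham2 : ∀ x ∈ Set.Ioo a b,
      (x : ℂ) * deriv m x =
        -(2 * l x * m x ^ 2 - (2 * ηinf * l x + θ₀) * m x
            + (1 / 2) * ηinf * (θ₀ + θinf))) :
    (∀ x ∈ Set.Ioo a b,
      (x : ℂ) * deriv l x = ηinf * l x ^ 2 + (θ₀ + 2) * l x - (x : ℂ) * η₀)
    ∧ ηinf * (θ₀ + θinf + 2) = 0 := by
  have hmc : ∀ x ∈ Set.Ioo a b, m x = constrainedMomentum η₀ ηinf θ₀ (x : ℂ) (l x) := hm
  have hric : ∀ x ∈ Set.Ioo a b,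
      (x : ℂ) * deriv l x = ηinf * l x ^ 2 + (θ₀ + 2) * l x - (x : ℂ) * η₀ := fun x hx => by
    have h1 : (x : ℂ) * deriv l x = lambdaField η₀ ηinf θ₀ (x : ℂ) (l x) (m x) := hham1 x hx
    rw [h1, hmc x hx, lambdaField_constrainedMomentum (hl0 x hx)]
  refine ⟨hric, ?_⟩
  obtain ⟨x, hx⟩ := Set.nonempty_Ioo.2 hab
  have hm_near : (fun s : ℝ => constrainedMomentum η₀ ηinf θ₀ (s : ℂ) (l s)) =ᶠ[𝓝 x] m :=
    eventually_of_mem (isOpen_Ioo.mem_nhds hx) fun s hs => (hmc s hs).symm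
  have hm_deriv := ((hasDerivAt_constrainedMomentum (hld x hx).hasDerivAt
    (hl0 x hx)).congr_of_eventuallyEq hm_near.symm).deriv
  have h2 : (x : ℂ) * deriv m x = muField ηinf θ₀ θinf (l x) (m x) := hham2 x hx
  rw [hm_deriv, hmc x hx, muField_constrainedMomentum (hl0 x hx) (hric x hx)] at h2
  linear_combination 2 * h2

/-- If `(λ, μ)` solve the `P'_III` Hamiltonian system with `μ` constrained to the
stated rational function of `λ`, then `λ` solves a Riccati equation and
`η∞(θ₀ + θ∞ + 2) = 0`. -/
theorem PIII_constrained_solution_Riccati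
    (η₀ ηinf θ₀ θinf : ℂ)
    (a b : ℝ) (hab : a < b) (h0 : (0 : ℝ) ∉ Set.Ioo a b)
    (l m : ℝ → ℂ)
    (hld : ∀ x ∈ Set.Ioo a b, DifferentiableAt ℝ l x)
    (hl0 : ∀ x ∈ Set.Ioo a b, l x ≠ 0)
    (hm : ∀ x ∈ Set.Ioo a b,
      m x = ηinf - (x : ℂ) * η₀ / l x ^ 2 + (θ₀ + 1) / l x)
    (hham1 : ∀ x ∈ Set.Ioo a b,
      (x : ℂ) * deriv l x =
        2 * l x ^ 2 * m x - (ηinf * l x ^ 2 + θ₀ * l x - η₀ * (x : ℂ)))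
    (hham2 : ∀ x ∈ Set.Ioo a b,
      (x : ℂ) * deriv m x =
        -(2 * l x * m x ^ 2 - (2 * ηinf * l x + θ₀) * m x
            + (1 / 2) * ηinf * (θ₀ + θinf))) :
    (∀ x ∈ Set.Ioo a b,
      (x : ℂ) * deriv l x = ηinf * l x ^ 2 + (θ₀ + 2) * l x - (x : ℂ) * η₀)
    ∧ ηinf * (θ₀ + θinf + 2) = 0 :=
  PIII_constrained_solution_Riccati_general η₀ ηinf θ₀ θinf a b hab l m hld hl0 hm hham1 hham2
end

section
/- Let t, λ, α₂ ∈ ℂ with α₂ ≠ 1/2. Set γ = −t, δ = 0, ε = −2, α = 1 − 2α₂, q = αλ, μ = 2λ² + t, and H = μ²/2 − (λ² + t/2)μ − (α₂ + 1/2)λ. Then for every z ∈ ℂ with z ≠ λ: (i) γ + δz + εz² − α/(αz − q) = −2z² − t − 1/(z−λ); and (ii) p(z)/(αz − q) = −(2α₂ + 1)z − 2H + μ/(z−λ), where p(z) = (α+ε)(αz² − 2qz) + (q² − δq − αγ). Hence the equation for the derivative of the tri-confluent Heun function coincides with the linear equation whose isomonodromic deformations are governed by the second Painlevé equation. -/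
/-!
With `q = α λ`, the apparent singularity `z = q / α` of the Heun derivative equation is the
point `z = λ` of the Painlevé II linear system, and `α / (α z - q) = 1 / (z - λ)`. The numerator
`p(z)` is `α` times a quadratic in `z - λ` without linear term, `(α - 2)(z - λ)² + (2λ² + t)`,
so dividing by `α (z - λ)` leaves a linear part and the residue `μ = 2λ² + t`. That value of `μ`
is exactly where the quadratic part `μ²/2 - (λ² + t/2) μ` of `H_II` vanishes, so
`H_II = -(α₂ + 1/2) λ` and the constant terms match.
-/

theorem div_mul_sub_mul_eq_one_div {K : Type*} [Field K] {a : K} (ha : a ≠ 0) (z w : K) :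
    a / (a * z - a * w) = 1 / (z - w) := by
  rw [← mul_sub, div_mul_cancel_left₀ ha, one_div]

theorem heun_numerator_eq_mul_sq_add {K : Type*} [Field K] (a ε w z t : K) :
    (a + ε) * (a * z ^ 2 - 2 * (a * w) * z) + ((a * w) ^ 2 - 0 * (a * w) - a * -t)
      = a * ((a + ε) * (z - w) ^ 2 + (-ε * w ^ 2 + t)) := by
  ring

theorem mul_sq_add_div_eq {K : Type*} [Field K] {z w : K} (h : z ≠ w) (c m : K) :
    (c * (z - w) ^ 2 + m) / (z - w) = c * (z - w) + m / (z - w) := by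
  rw [add_div, pow_two, ← mul_assoc, mul_div_cancel_right₀ _ (sub_ne_zero.mpr h)]

/-- With the parameter identification of the paper, the equation for the derivative
of the tri-confluent Heun function coincides with the linear equation whose
isomonodromic deformations are governed by the second Painlevé equation. -/
theorem tri_confluent_Heun_derivative_eq_PII_linear
    (t lam α₂ γ δ ε α q μ H : ℂ)
    (hα₂ : α₂ ≠ 1 / 2)
    (hγ : γ = -t) (hδ : δ = 0) (hε : ε = -2)
    (hα : α = 1 - 2 * α₂) (hq : q = α * lam)
    (hμ : μ = 2 * lam ^ 2 + t)
    (hH : H = μ ^ 2 / 2 - (lam ^ 2 + t / 2) * μ - (α₂ + 1 / 2) * lam) :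
    ∀ z : ℂ, z ≠ lam →
      (γ + δ * z + ε * z ^ 2 - α / (α * z - q)
          = -2 * z ^ 2 - t - 1 / (z - lam))
      ∧
      (((α + ε) * (α * z ^ 2 - 2 * q * z) + (q ^ 2 - δ * q - α * γ)) / (α * z - q)
        = -(2 * α₂ + 1) * z - 2 * H + μ / (z - lam)) := by
  intro z hz
  have hα0 : α ≠ 0 := by
    rw [hα]
    intro h
    exact hα₂ (by linear_combination -h / 2)
  have hH_eq : H = -(α₂ + 1 / 2) * lam := by rw [hH, hμ]; ring
  subst hγ hδ hε hq
  refine ⟨?_, ?_⟩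
  · rw [div_mul_sub_mul_eq_one_div hα0]
    ring
  · rw [heun_numerator_eq_mul_sq_add, ← mul_sub, mul_div_mul_left _ _ hα0,
      mul_sq_add_div_eq hz, hH_eq, hμ, hα]
    ring
end

section
/- Let κ₀, κ₁, θ, κ∞, κ ∈ ℂ with κ = (1/4)(κ₀ + κ₁ + θ − 1)² − (1/4)κ∞², and let I ⊆ ℝ be an open interval with 0 ∉ I and 1 ∉ I. Let λ, μ : I → ℂ be differentiable with λ(t) ∉ {0, 1, t} for all t ∈ I, satisfying the Hamiltonian system t(t−1)·λ'(t) = 2λ(λ−1)(λ−t)μ − (κ₀(λ−1)(λ−t) + κ₁λ(λ−t) + (θ−1)λ(λ−1)) and t(t−1)·μ'(t) = −[(3λ² − 2(1+t)λ + t)μ² − (κ₀(2λ−1−t) + κ₁(2λ−t) + (θ−1)(2λ−1))μ + κ] on I. Then λ is twice differentiable and satisfies the sixth Painlevé equation λ'' = (1/2)(1/λ + 1/(λ−1) + 1/(λ−t))(λ')² − (1/t + 1/(t−1) + 1/(λ−t))λ' + (λ(λ−1)(λ−t)/(t²(t−1)²))·(α₆ + β₆·t/λ² + γ₆·(t−1)/(λ−1)²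 + δ₆·t(t−1)/(λ−t)²), where α₆ = κ∞²/2, β₆ = −κ₀²/2, γ₆ = κ₁²/2, δ₆ = (1 − θ²)/2. -/
/-!
The first Hamiltonian equation says that, near each point of the interval, `λ'` equals the
differentiable function `∂_μ(t(t-1)H_VI)(λ, μ, t) / (t(t-1))`; hence `λ` is twice differentiable
and `λ''` follows from the chain rule. Eliminating `μ'` with the second equation and then `μ`
itself with the first (solved for `μ`, which is possible since `λ(λ-1)(λ-t) ≠ 0`) leaves a rational
identity in `t, λ, λ'`, which is `P_VI`; the constant `κ` is what produces `α = κ∞²/2`.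
-/

open Filter Topology

theorem HasDerivAt.of_eventually_mul_eq {𝕜 𝕜' : Type*} [NontriviallyNormedField 𝕜]
    [NontriviallyNormedField 𝕜'] [NormedAlgebra 𝕜 𝕜'] {f g s : 𝕜 → 𝕜'} {g' s' : 𝕜'} {x : 𝕜}
    (hg : HasDerivAt g g' x) (hs : HasDerivAt s s' x) (hsx : s x ≠ 0)
    (h : ∀ᶠ y in 𝓝 x, s y * f y = g y) :
    HasDerivAt f ((g' - s' * f x) / s x) x := by
  have hf : f =ᶠ[𝓝 x] fun y ↦ g y / s y := by
    filter_upwards [h, hs.continuousAt.eventually_ne hsx] with y hy hy0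
    rw [← hy, mul_div_cancel_left₀ _ hy0]
  have hfx : f x = g x / s x := hf.eq_of_nhds
  refine ((hg.div hs hsx).congr_of_eventuallyEq hf).congr_deriv ?_
  rw [hfx]
  field_simp

theorem hasDerivAt_ofReal (x : ℝ) : HasDerivAt (fun y : ℝ ↦ (y : ℂ)) 1 x := by
  simpa using (hasDerivAt_id x).ofReal_comp

theorem hasDerivAt_ofReal_mul_ofReal_sub_one (x : ℝ) :
    HasDerivAt (fun y : ℝ ↦ (y : ℂ) * ((y : ℂ) - 1)) (2 * x - 1) x :=
  ((hasDerivAt_ofReal x).fun_mul ((hasDerivAt_ofReal x).sub_const 1)).congr_deriv (by ring)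

/-- `t(t-1) ∂H_VI/∂μ` at `(λ, μ, t) = (L, M, t)`. -/
def pviHamDerivMu (κ₀ κ₁ θ L M t : ℂ) : ℂ :=
  2 * L * (L - 1) * (L - t) * M
    - (κ₀ * (L - 1) * (L - t) + κ₁ * L * (L - t) + (θ - 1) * L * (L - 1))

/-- `t(t-1) ∂H_VI/∂λ` at `(λ, μ, t) = (L, M, t)`. -/
def pviHamDerivLambda (κ₀ κ₁ θ κ L M t : ℂ) : ℂ :=
  (3 * L ^ 2 - 2 * (1 + t) * L + t) * M ^ 2
    - (κ₀ * (2 * L - 1 - t) + κ₁ * (2 * L - t) + (θ - 1) * (2 * L - 1)) * M + κ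

/-- `P_VI` reads `λ'' = painleveVI α β γ δ t λ λ'`. -/
noncomputable def painleveVI (α β γ δ t L L' : ℂ) : ℂ :=
  (1 / 2) * (1 / L + 1 / (L - 1) + 1 / (L - t)) * L' ^ 2
    - (1 / t + 1 / (t - 1) + 1 / (L - t)) * L'
    + (L * (L - 1) * (L - t) / (t ^ 2 * (t - 1) ^ 2))
      * (α + β * t / L ^ 2 + γ * (t - 1) / (L - 1) ^ 2 + δ * t * (t - 1) / (L - t) ^ 2)

theorem HasDerivAt.pviHamDerivMu (κ₀ κ₁ θ : ℂ) {l m : ℝ → ℂ} {l' m' : ℂ} {x : ℝ}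
    (hl : HasDerivAt l l' x) (hm : HasDerivAt m m' x) :
    HasDerivAt (fun y ↦ pviHamDerivMu κ₀ κ₁ θ (l y) (m y) y)
      ((2 * (3 * l x ^ 2 - 2 * (1 + x) * l x + x) * m x
          - (κ₀ * (2 * l x - 1 - x) + κ₁ * (2 * l x - x) + (θ - 1) * (2 * l x - 1))) * l'
        + 2 * l x * (l x - 1) * (l x - x) * m'
        + (κ₀ * (l x - 1) + κ₁ * l x - 2 * l x * (l x - 1) * m x)) x := by
  have hl1 := hl.sub_const 1
  have hlt := hl.fun_sub (hasDerivAt_ofReal x)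
  refine ((((hl.const_mul 2).fun_mul hl1).fun_mul hlt).fun_mul hm |>.fun_sub
    ((((hl1.const_mul κ₀).fun_mul hlt).fun_add ((hl.const_mul κ₁).fun_mul hlt)).fun_add
      ((hl.const_mul (θ - 1)).fun_mul hl1))).congr_deriv ?_
  ring

theorem painleveVI_of_pviHam {κ₀ κ₁ θ κinf κ t L M L' M' : ℂ}
    (hκ : κ = (1 / 4) * (κ₀ + κ₁ + θ - 1) ^ 2 - (1 / 4) * κinf ^ 2)
    (ht0 : t ≠ 0) (ht1 : t ≠ 1) (hL0 : L ≠ 0) (hL1 : L ≠ 1) (hLt : L ≠ t)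
    (hL' : t * (t - 1) * L' = pviHamDerivMu κ₀ κ₁ θ L M t)
    (hM' : t * (t - 1) * M' = -pviHamDerivLambda κ₀ κ₁ θ κ L M t) :
    ((2 * (3 * L ^ 2 - 2 * (1 + t) * L + t) * M
        - (κ₀ * (2 * L - 1 - t) + κ₁ * (2 * L - t) + (θ - 1) * (2 * L - 1))) * L'
      + 2 * L * (L - 1) * (L - t) * M' + (κ₀ * (L - 1) + κ₁ * L - 2 * L * (L - 1) * M)
      - (2 * t - 1) * L') / (t * (t - 1))
      = painleveVI (κinf ^ 2 / 2) (-(κ₀ ^ 2) / 2) (κ₁ ^ 2 / 2) ((1 - θ ^ 2) / 2) t L L' := by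
  have ht1' : t - 1 ≠ 0 := sub_ne_zero.2 ht1
  have hL1' : L - 1 ≠ 0 := sub_ne_zero.2 hL1
  have hLt' : L - t ≠ 0 := sub_ne_zero.2 hLt
  have hM : M = (t * (t - 1) * L'
      + (κ₀ * (L - 1) * (L - t) + κ₁ * L * (L - t) + (θ - 1) * L * (L - 1)))
        / (2 * L * (L - 1) * (L - t)) := by
    rw [hL', pviHamDerivMu]
    field_simp
    ring
  rw [eq_div_of_mul_eq (mul_ne_zero ht0 ht1') ((mul_comm _ _).trans hM'), pviHamDerivLambda,
    painleveVI, hκ, hM]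
  field_simp
  ring

/-- Eliminating `μ` from the `P_VI` Hamiltonian system yields the sixth Painlevé
equation for `λ`. -/
theorem PVI_Hamiltonian_system_to_PVI
    (κ₀ κ₁ θ κinf κ : ℂ)
    (hκ : κ = (1 / 4) * (κ₀ + κ₁ + θ - 1) ^ 2 - (1 / 4) * κinf ^ 2)
    (a b : ℝ) (h0 : (0 : ℝ) ∉ Set.Ioo a b) (h1 : (1 : ℝ) ∉ Set.Ioo a b)
    (l m : ℝ → ℂ)
    (hld : ∀ x ∈ Set.Ioo a b, DifferentiableAt ℝ l x)
    (hmd : ∀ x ∈ Set.Ioo a b, DifferentiableAt ℝ m x)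
    (hl0 : ∀ x ∈ Set.Ioo a b, l x ≠ 0)
    (hl1 : ∀ x ∈ Set.Ioo a b, l x ≠ 1)
    (hlt : ∀ x ∈ Set.Ioo a b, l x ≠ (x : ℂ))
    (hham1 : ∀ x ∈ Set.Ioo a b,
      (x : ℂ) * ((x : ℂ) - 1) * deriv l x =
        2 * l x * (l x - 1) * (l x - (x : ℂ)) * m x
          - (κ₀ * (l x - 1) * (l x - (x : ℂ)) + κ₁ * l x * (l x - (x : ℂ))
              + (θ - 1) * l x * (l x - 1)))
    (hham2 : ∀ x ∈ Set.Ioo a b,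
      (x : ℂ) * ((x : ℂ) - 1) * deriv m x =
        -((3 * l x ^ 2 - 2 * (1 + (x : ℂ)) * l x + (x : ℂ)) * m x ^ 2
            - (κ₀ * (2 * l x - 1 - (x : ℂ)) + κ₁ * (2 * l x - (x : ℂ))
                + (θ - 1) * (2 * l x - 1)) * m x + κ)) :
    ∀ x ∈ Set.Ioo a b,
      DifferentiableAt ℝ (deriv l) x ∧
      deriv (deriv l) x =
        (1 / 2) * (1 / l x + 1 / (l x - 1) + 1 / (l x - (x : ℂ))) * (deriv l x) ^ 2
          - (1 / (x : ℂ) + 1 / ((x : ℂ) - 1) + 1 / (l x - (x : ℂ))) * deriv l x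
          + (l x * (l x - 1) * (l x - (x : ℂ)) / ((x : ℂ) ^ 2 * ((x : ℂ) - 1) ^ 2))
            * (κinf ^ 2 / 2 + (-(κ₀ ^ 2) / 2) * (x : ℂ) / l x ^ 2
                + (κ₁ ^ 2 / 2) * ((x : ℂ) - 1) / (l x - 1) ^ 2
                + ((1 - θ ^ 2) / 2) * (x : ℂ) * ((x : ℂ) - 1) / (l x - (x : ℂ)) ^ 2) := by
  intro x hx
  have hx0 : (x : ℂ) ≠ 0 := by exact_mod_cast ne_of_mem_of_not_mem hx h0
  have hx1 : (x : ℂ) ≠ 1 := by exact_mod_cast ne_of_mem_of_not_mem hx h1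
  have hP := (hld x hx).hasDerivAt.pviHamDerivMu κ₀ κ₁ θ (hmd x hx).hasDerivAt
  have hl'' := hP.of_eventually_mul_eq (hasDerivAt_ofReal_mul_ofReal_sub_one x)
    (mul_ne_zero hx0 (sub_ne_zero.2 hx1)) (eventually_of_mem (isOpen_Ioo.mem_nhds hx) hham1)
  refine ⟨hl''.differentiableAt, ?_⟩
  rw [hl''.deriv]
  exact painleveVI_of_pviHam hκ hx0 hx1 (hl0 x hx) (hl1 x hx) (hlt x hx) (hham1 x hx) (hham2 x hx)
end
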